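/- Let C be a coalgebra over ℂ and let x ∈ C be cocentral, i.e. flip(Δ(x)) = Δ(x). Then for every n ≥ 2 the iterated comultiplication Δ^{n-1}(x) ∈ C^{⊗n} is invariant under cyclic rotation of the tensor factors: the linear map C^{⊗n} → C^{⊗n} induced by c₁⊗c₂⊗⋯⊗cₙ ↦ cₙ⊗c₁⊗⋯⊗c_{n-1} fixes Δ^{n-1}(x). -/

import Mathlib

/-!
STATEMENT 2: Let `C` be a coalgebra over `ℂ` and let `x ∈ C` be cocentral
(`flip (Δ x) = Δ x`).  Then for every `n ≥ 2` the iterated comultiplication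
`Δ^{n-1} x ∈ C^{⊗n}` is invariant under cyclic rotation of the tensor factors, i.e. the
linear map induced by `c₁ ⊗ c₂ ⊗ ⋯ ⊗ cₙ ↦ cₙ ⊗ c₁ ⊗ ⋯ ⊗ c_{n-1}` fixes `Δ^{n-1} x`.

Below, `C^{⊗(n+1)}` is `⨂[ℂ] (_ : Fin (n+1)), C`; `iterComul n : C →ₗ C^{⊗(n+1)}` is the
`n`-fold iterated comultiplication `Δ^n`; and the cyclic rotation is
`PiTensorProduct.reindex ℂ (fun _ ↦ C) (finRotate (n+1))`, which indeed sends
`⨂ₜ m ↦ ⨂ₜ (m ∘ (finRotate (n+1)).symm)`, i.e.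
`c₁ ⊗ ⋯ ⊗ c_{n+1} ↦ c_{n+1} ⊗ c₁ ⊗ ⋯ ⊗ cₙ`.  The statement is quantified over `n ≥ 1`,
i.e. over tensor powers with at least `2` factors.
-/

open TensorProduct PiTensorProduct

noncomputable section

variable (C : Type*) [AddCommGroup C] [Module ℂ C] [Coalgebra ℂ C]

/-- The canonical map `C ⊗ C^{⊗n} → C^{⊗(n+1)}`, `c ⊗ (c₁ ⊗ ⋯ ⊗ cₙ) ↦ c ⊗ c₁ ⊗ ⋯ ⊗ cₙ`. -/
def glue (n : ℕ) : (C ⊗[ℂ] (⨂[ℂ] (_ : Fin n), C)) →ₗ[ℂ] ⨂[ℂ] (_ : Fin (n + 1)), C :=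
  (PiTensorProduct.reindex ℂ (fun _ => C)
      (finSumFinEquiv.trans (finCongr (Nat.add_comm 1 n)))).toLinearMap ∘ₗ
    (PiTensorProduct.tmulEquiv ℂ C).toLinearMap ∘ₗ
      TensorProduct.map
        ((PiTensorProduct.subsingletonEquiv (s := fun _ : Fin 1 => C) (0 : Fin 1)).symm :
          C ≃ₗ[ℂ] ⨂[ℂ] (_ : Fin 1), C).toLinearMap
        LinearMap.id

/-- The iterated comultiplication `Δ^n : C → C^{⊗(n+1)}`:
`Δ^0 = id`, `Δ^{n+1} = (id ⊗ Δ^n) ∘ Δ`. -/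
def iterComul : (n : ℕ) → (C →ₗ[ℂ] ⨂[ℂ] (_ : Fin (n + 1)), C)
  | 0 => ((PiTensorProduct.subsingletonEquiv (s := fun _ : Fin 1 => C) (0 : Fin 1)).symm :
      C ≃ₗ[ℂ] ⨂[ℂ] (_ : Fin 1), C).toLinearMap
  | (n + 1) => glue C (n + 1) ∘ₗ LinearMap.lTensor C (iterComul n) ∘ₗ Coalgebra.comul

set_option linter.unusedSectionVars false

/-- The canonical map `C^{⊗n} ⊗ C → C^{⊗(n+1)}` appending the extra factor at the end. -/
def glue' (n : ℕ) : ((⨂[ℂ] (_ : Fin n), C) ⊗[ℂ] C) →ₗ[ℂ] ⨂[ℂ] (_ : Fin (n + 1)), C :=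
  (PiTensorProduct.reindex ℂ (fun _ => C) finSumFinEquiv).toLinearMap ∘ₗ
    (PiTensorProduct.tmulEquiv ℂ C).toLinearMap ∘ₗ
      TensorProduct.map LinearMap.id
        ((PiTensorProduct.subsingletonEquiv (s := fun _ : Fin 1 => C) (0 : Fin 1)).symm :
          C ≃ₗ[ℂ] ⨂[ℂ] (_ : Fin 1), C).toLinearMap

lemma sub_symm (c : C) :
    (PiTensorProduct.subsingletonEquiv (s := fun _ : Fin 1 => C) (0 : Fin 1)).symm c = PiTensorProduct.tprod ℂ (fun _ => c) := by
  rw [LinearEquiv.symm_apply_eq, PiTensorProduct.subsingletonEquiv_apply_tprod]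

lemma glue_tprod (n : ℕ) (c : C) (f : Fin n → C) :
    glue C n (c ⊗ₜ[ℂ] PiTensorProduct.tprod ℂ f) = PiTensorProduct.tprod ℂ (Fin.cases c f) := by
  simp only [glue, LinearMap.comp_apply, TensorProduct.map_tmul, LinearMap.id_apply,
    LinearEquiv.coe_coe, sub_symm]
  rw [show PiTensorProduct.tprod ℂ (fun _ : Fin 1 => c) = PiTensorProduct.tprod ℂ (fun i : Fin 1 => (fun _ => c) i) from rfl]
  rw [PiTensorProduct.tmulEquiv_apply, PiTensorProduct.reindex_tprod]
  congr 1
  funext j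
  refine Fin.cases ?_ (fun i => ?_) j
  · have : (finSumFinEquiv.trans (finCongr (Nat.add_comm 1 n))).symm 0 =
        Sum.inl (0 : Fin 1) := by
      rw [Equiv.symm_apply_eq]
      simp [Fin.ext_iff]
    simp only [this]
    simp
  · have : (finSumFinEquiv.trans (finCongr (Nat.add_comm 1 n))).symm i.succ =
        Sum.inr i := by
      rw [Equiv.symm_apply_eq]
      simp [Fin.ext_iff, Nat.add_comm]
    simp only [this]
    simp

lemma glue'_tprod (n : ℕ) (f : Fin n → C) (c : C) :
    glue' C n (PiTensorProduct.tprod ℂ f ⊗ₜ[ℂ] c) = PiTensorProduct.tprod ℂ (Fin.snoc f c) := by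
  simp only [glue', LinearMap.comp_apply, TensorProduct.map_tmul, LinearMap.id_apply,
    LinearEquiv.coe_coe, sub_symm]
  rw [show PiTensorProduct.tprod ℂ (fun _ : Fin 1 => c) = PiTensorProduct.tprod ℂ (fun i : Fin 1 => (fun _ => c) i) from rfl]
  rw [PiTensorProduct.tmulEquiv_apply, PiTensorProduct.reindex_tprod]
  congr 1
  funext j
  refine Fin.lastCases ?_ (fun i => ?_) j
  · have : finSumFinEquiv.symm (Fin.last n) = Sum.inr (0 : Fin 1) := by
      rw [Equiv.symm_apply_eq]
      simp [Fin.ext_iff]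
    simp [this]
  · have : finSumFinEquiv.symm i.castSucc = Sum.inl i := by
      rw [Equiv.symm_apply_eq]
      simp [Fin.ext_iff]
    simp [this]

lemma rot_glue' (n : ℕ) (t : ⨂[ℂ] (_ : Fin n), C) (c : C) :
    PiTensorProduct.reindex ℂ (fun _ => C) (finRotate (n + 1)) (glue' C n (t ⊗ₜ[ℂ] c))
      = glue C n (c ⊗ₜ[ℂ] t) := by
  induction t using PiTensorProduct.induction_on with
  | smul_tprod r f =>
    rw [← TensorProduct.smul_tmul', TensorProduct.tmul_smul, map_smul, map_smul, map_smul]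
    congr 1
    rw [glue'_tprod, glue_tprod, PiTensorProduct.reindex_tprod]
    congr 1
    funext j
    refine Fin.cases ?_ (fun i => ?_) j
    · have : (finRotate (n + 1)).symm 0 = Fin.last n := by
        rw [Equiv.symm_apply_eq, finRotate_succ_apply]
        simp [Fin.ext_iff, Fin.add_def]
      simp [this, Function.comp]
    · have : (finRotate (n + 1)).symm i.succ = i.castSucc := by
        rw [Equiv.symm_apply_eq, finRotate_succ_apply, Fin.coeSucc_eq_succ]
      simp [this, Function.comp]
  | add a b ha hb =>
    rw [TensorProduct.add_tmul, map_add, map_add, TensorProduct.tmul_add, map_add, ha, hb]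

lemma glue_glue' (n : ℕ) (a b : C) (t : ⨂[ℂ] (_ : Fin n), C) :
    glue C (n + 1) (a ⊗ₜ[ℂ] glue' C n (t ⊗ₜ[ℂ] b))
      = glue' C (n + 1) (glue C n (a ⊗ₜ[ℂ] t) ⊗ₜ[ℂ] b) := by
  induction t using PiTensorProduct.induction_on with
  | smul_tprod r f =>
    rw [← TensorProduct.smul_tmul', map_smul, TensorProduct.tmul_smul, map_smul,
      TensorProduct.tmul_smul, map_smul, ← TensorProduct.smul_tmul', map_smul]
    congr 1
    rw [glue'_tprod, glue_tprod, glue_tprod, glue'_tprod]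
    congr 1
    funext j
    refine Fin.cases ?_ (fun i => ?_) j
    · rw [Fin.cases_zero, ← Fin.castSucc_zero, Fin.snoc_castSucc, Fin.cases_zero]
    · rw [Fin.cases_succ]
      refine Fin.lastCases ?_ (fun k => ?_) i
      · rw [Fin.snoc_last, Fin.succ_last, Fin.snoc_last]
      · rw [Fin.snoc_castSucc, Fin.succ_castSucc, Fin.snoc_castSucc, Fin.cases_succ]
  | add u v hu hv =>
    rw [TensorProduct.add_tmul, map_add, TensorProduct.tmul_add, map_add, hu, hv,
      TensorProduct.tmul_add, map_add, TensorProduct.add_tmul, map_add]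

lemma lTensor_eq_rTensor_aux (n : ℕ) (F : C →ₗ[ℂ] ⨂[ℂ] (_ : Fin (n + 1)), C)
    (w : (C ⊗[ℂ] C) ⊗[ℂ] C) :
    glue C (n + 2)
      ((LinearMap.lTensor C (glue' C (n + 1) ∘ₗ LinearMap.rTensor C F))
        (TensorProduct.assoc ℂ C C C w))
    = glue' C (n + 2)
      ((LinearMap.rTensor C (glue C (n + 1) ∘ₗ LinearMap.lTensor C F)) w) := by
  induction w using TensorProduct.induction_on with
  | zero => simp
  | add u v hu hv => simp only [map_add, hu, hv]
  | tmul y c =>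
    induction y using TensorProduct.induction_on with
    | zero => simp [TensorProduct.zero_tmul]
    | add u v hu hv =>
      simp only [TensorProduct.add_tmul, map_add, hu, hv]
    | tmul a b =>
      simp only [TensorProduct.assoc_tmul, LinearMap.lTensor_tmul, LinearMap.rTensor_tmul,
        LinearMap.comp_apply]
      exact glue_glue' C (n + 1) a c (F b)

lemma iterComul_succ_eq (n : ℕ) (x : C) :
    iterComul C (n + 1) x
      = glue' C (n + 1) ((LinearMap.rTensor C (iterComul C n)) (Coalgebra.comul x)) := by
  induction n generalizing x with
  | zero =>
    show glue C 1 ((LinearMap.lTensor C (iterComul C 0)) (Coalgebra.comul x)) = _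
    induction (Coalgebra.comul (R := ℂ) x) using TensorProduct.induction_on with
    | zero => simp
    | add u v hu hv => simp only [map_add, hu, hv]
    | tmul a b =>
      simp only [LinearMap.lTensor_tmul, LinearMap.rTensor_tmul]
      show glue C 1 (a ⊗ₜ (PiTensorProduct.subsingletonEquiv (s := fun _ : Fin 1 => C) (0 : Fin 1)).symm b)
        = glue' C 1 ((PiTensorProduct.subsingletonEquiv (s := fun _ : Fin 1 => C) (0 : Fin 1)).symm a ⊗ₜ b)
      rw [sub_symm, sub_symm, glue_tprod, glue'_tprod]
      congr 1
      funext j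
      refine Fin.cases ?_ (fun i => ?_) j
      · rw [Fin.cases_zero, ← Fin.castSucc_zero, Fin.snoc_castSucc]
      · rw [Fin.cases_succ]
        have : i = Fin.last 0 := Subsingleton.elim _ _
        subst this
        rw [Fin.succ_last, Fin.snoc_last]
  | succ n ih =>
    have hIH : iterComul C (n + 1)
        = glue' C (n + 1) ∘ₗ LinearMap.rTensor C (iterComul C n) ∘ₗ Coalgebra.comul :=
      LinearMap.ext fun y => ih y
    show glue C (n + 2) ((LinearMap.lTensor C (iterComul C (n + 1))) (Coalgebra.comul x)) = _
    rw [hIH]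
    have h1 : LinearMap.lTensor C
        (glue' C (n + 1) ∘ₗ LinearMap.rTensor C (iterComul C n) ∘ₗ Coalgebra.comul)
        = LinearMap.lTensor C (glue' C (n + 1) ∘ₗ LinearMap.rTensor C (iterComul C n)) ∘ₗ
          LinearMap.lTensor C Coalgebra.comul := by
      rw [← LinearMap.lTensor_comp, LinearMap.comp_assoc]
    rw [h1]
    simp only [LinearMap.comp_apply]
    rw [← Coalgebra.coassoc_apply]
    rw [lTensor_eq_rTensor_aux, ← hIH]
    congr 1
    rw [← LinearMap.comp_apply, ← LinearMap.rTensor_comp, LinearMap.comp_assoc]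
    rfl

theorem cocentral_iterComul_rotation_invariant {C : Type*} [AddCommGroup C] [Module ℂ C]
    [Coalgebra ℂ C] (x : C)
    -- `x` is cocentral:
    (hx : (TensorProduct.comm ℂ C C) (Coalgebra.comul x) = Coalgebra.comul x) :
    ∀ n : ℕ, 1 ≤ n →
      PiTensorProduct.reindex ℂ (fun _ => C) (finRotate (n + 1)) (iterComul C n x)
        = iterComul C n x := by
  intro n hn
  obtain ⟨m, rfl⟩ : ∃ m, n = m + 1 := ⟨n - 1, by omega⟩
  rw [iterComul_succ_eq]
  have key : ∀ u : C ⊗[ℂ] C,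
      PiTensorProduct.reindex ℂ (fun _ => C) (finRotate (m + 1 + 1))
        (glue' C (m + 1) ((LinearMap.rTensor C (iterComul C m)) u))
      = glue C (m + 1)
          ((LinearMap.lTensor C (iterComul C m)) ((TensorProduct.comm ℂ C C) u)) := by
    intro u
    induction u using TensorProduct.induction_on with
    | zero => simp
    | add a b ha hb => simp only [map_add, ha, hb]
    | tmul a b =>
      simp only [LinearMap.rTensor_tmul, TensorProduct.comm_tmul, LinearMap.lTensor_tmul]
      exact rot_glue' C (m + 1) (iterComul C m a) b
  rw [key, hx]
  exact (iterComul_succ_eq C m x).symm ▸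
    (show iterComul C (m + 1) x
      = glue C (m + 1) ((LinearMap.lTensor C (iterComul C m)) (Coalgebra.comul x)) from rfl).symm

end
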